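/- arXiv:1612.00358 — 2 statements merged into one kernel-verified Lean document; each statement's English description precedes it below -/
import Mathlib

section
/- Let L > 0, C̃ > 0, and let h : [0, L] → ℝ be continuous and nonnegative, and suppose that h(Z) ≤ h(0) + C̃ ∫₀^Z ( √(h(s)) + h(s) ) ds for every Z ∈ [0, L]. Then √(h(Z)) ≤ ( √(h(0)) + 1 ) e^{C̃ Z / 2} − 1 for every Z ∈ [0, L]. -/
private lemma sqrt_add_le' {a b : ℝ} (ha : 0 ≤ a) (hb : 0 ≤ b) :
    Real.sqrt (a + b) ≤ Real.sqrt a + Real.sqrt b := by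
  have h1 : a + b ≤ (Real.sqrt a + Real.sqrt b) ^ 2 := by
    have := Real.sq_sqrt ha
    have := Real.sq_sqrt hb
    have h2 : 0 ≤ Real.sqrt a * Real.sqrt b :=
      mul_nonneg (Real.sqrt_nonneg a) (Real.sqrt_nonneg b)
    nlinarith
  calc Real.sqrt (a + b) ≤ Real.sqrt ((Real.sqrt a + Real.sqrt b) ^ 2) := Real.sqrt_le_sqrt h1
    _ = Real.sqrt a + Real.sqrt b := Real.sqrt_sq (by positivity)

theorem stmt_7 (L Ctilde : ℝ) (hL : 0 < L) (hC : 0 < Ctilde) (h : ℝ → ℝ)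
    (hhc : ContinuousOn h (Set.Icc 0 L))
    (hh0 : ∀ Z ∈ Set.Icc (0 : ℝ) L, 0 ≤ h Z)
    (hineq : ∀ Z ∈ Set.Icc (0 : ℝ) L,
      h Z ≤ h 0 + Ctilde * ∫ s in (0 : ℝ)..Z, (Real.sqrt (h s) + h s)) :
    ∀ Z ∈ Set.Icc (0 : ℝ) L,
      Real.sqrt (h Z) ≤ (Real.sqrt (h 0) + 1) * Real.exp (Ctilde * Z / 2) - 1 := by
  -- extend h continuously
  set H : ℝ → ℝ := fun x => h (max 0 (min x L)) with hHdef
  have hproj : ∀ x : ℝ, max 0 (min x L) ∈ Set.Icc 0 L := by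
    intro x
    exact ⟨le_max_left _ _, max_le hL.le (min_le_right _ _)⟩
  have hHcont : Continuous H := by
    apply hhc.comp_continuous _ hproj
    exact continuous_const.max (continuous_id.min continuous_const)
  have hHeq : ∀ x ∈ Set.Icc (0 : ℝ) L, H x = h x := by
    intro x hx
    simp only [hHdef]
    rw [min_eq_left hx.2, max_eq_right hx.1]
  set g : ℝ → ℝ := fun s => Real.sqrt (H s) + H s with hgdef
  have hgcont : Continuous g := (Real.continuous_sqrt.comp hHcont).add hHcont
  set F : ℝ → ℝ := fun Z => h 0 + Ctilde * ∫ s in (0 : ℝ)..Z, g s with hFdef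
  have hFderiv : ∀ z : ℝ, HasDerivAt F (Ctilde * g z) z := by
    intro z
    have : HasDerivAt (fun Z => ∫ s in (0 : ℝ)..Z, g s) (g z) z :=
      intervalIntegral.integral_hasDerivAt_right (hgcont.intervalIntegrable _ _)
        (hgcont.stronglyMeasurableAtFilter _ _) hgcont.continuousAt
    exact (this.const_mul Ctilde).const_add (h 0)
  have hFcont : Continuous F := by
    have : Differentiable ℝ F := fun z => (hFderiv z).differentiableAt
    exact this.continuous
  -- hineq in terms of F
  have hhF : ∀ Z ∈ Set.Icc (0 : ℝ) L, h Z ≤ F Z := by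
    intro Z hZ
    have hInt : (∫ s in (0 : ℝ)..Z, (Real.sqrt (h s) + h s)) = ∫ s in (0 : ℝ)..Z, g s := by
      apply intervalIntegral.integral_congr
      intro s hs
      have hs' : s ∈ Set.Icc (0 : ℝ) L := by
        rw [Set.uIcc_of_le hZ.1] at hs
        exact ⟨hs.1, hs.2.trans hZ.2⟩
      simp [hgdef, hHeq s hs']
    have := hineq Z hZ
    rw [hInt] at this
    exact this
  have hF0 : F 0 = h 0 := by simp [hFdef]
  have hFnonneg : ∀ Z ∈ Set.Icc (0 : ℝ) L, 0 ≤ F Z := fun Z hZ => (hh0 Z hZ).trans (hhF Z hZ)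
  -- main ε-step
  have key : ∀ ε > (0:ℝ), ∀ Z ∈ Set.Icc (0 : ℝ) L,
      Real.sqrt (h Z) ≤ (Real.sqrt (h 0 + ε) + 1) * Real.exp (Ctilde * Z / 2) - 1 := by
    intro ε hε Z hZ
    set ψ : ℝ → ℝ := fun z => (Real.sqrt (F z + ε) + 1) * Real.exp (-(Ctilde / 2) * z) with hψdef
    have hψcont : Continuous ψ := by
      apply Continuous.mul
      · exact (Real.continuous_sqrt.comp (hFcont.add continuous_const)).add continuous_const
      · exact Real.continuous_exp.comp (continuous_const.mul continuous_id)
    have hd : ∀ z ∈ Set.Ioo (0:ℝ) L,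
        HasDerivAt ψ ((Ctilde * g z * (1 / (2 * Real.sqrt (F z + ε)))) *
          Real.exp (-(Ctilde / 2) * z) +
          (Real.sqrt (F z + ε) + 1) * (Real.exp (-(Ctilde / 2) * z) * (-(Ctilde / 2)))) z := by
      intro z hz
      have h1 : HasDerivAt (fun x => F x + ε) (Ctilde * g z) z := (hFderiv z).add_const ε
      have hzI : z ∈ Set.Icc (0:ℝ) L := ⟨hz.1.le, hz.2.le⟩
      have hFε : 0 < F z + ε := by linarith [hFnonneg z hzI]
      have h2 : HasDerivAt (fun x => Real.sqrt (F x + ε) + 1)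
          (Ctilde * g z * (1 / (2 * Real.sqrt (F z + ε)))) z := by
        have := (Real.hasDerivAt_sqrt hFε.ne').comp z h1
        simpa [mul_comm] using this.add_const 1
      have h3 : HasDerivAt (fun x => Real.exp (-(Ctilde / 2) * x))
          (Real.exp (-(Ctilde / 2) * z) * (-(Ctilde / 2))) z := by
        have := ((hasDerivAt_id z).const_mul (-(Ctilde / 2))).exp
        simpa [mul_comm] using this
      exact h2.mul h3
    have hψanti : AntitoneOn ψ (Set.Icc 0 L) := by
      apply antitoneOn_of_deriv_nonpos (convex_Icc 0 L) hψcont.continuousOn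
      · rw [interior_Icc]
        exact fun z hz => (hd z hz).differentiableAt.differentiableWithinAt
      · rw [interior_Icc]
        intro z hz
        rw [(hd z hz).deriv]
        have hzI : z ∈ Set.Icc (0:ℝ) L := ⟨hz.1.le, hz.2.le⟩
        have hFε : 0 < F z + ε := by linarith [hFnonneg z hzI]
        set a := Real.sqrt (F z + ε) with hadef
        have ha : 0 < a := Real.sqrt_pos.mpr hFε
        have ha2 : a ^ 2 = F z + ε := Real.sq_sqrt hFε.le
        have hgz : g z ≤ a + a ^ 2 := by
          have hhz : H z = h z := hHeq z hzI
          have h1 : h z ≤ F z + ε := by linarith [hhF z hzI]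
          have h2 : Real.sqrt (h z) ≤ a := by
            rw [hadef]
            exact Real.sqrt_le_sqrt (by linarith [hhF z hzI])
          simp only [hgdef, hhz]
          nlinarith
        have hexp : 0 < Real.exp (-(Ctilde / 2) * z) := Real.exp_pos _
        clear_value a
        have hmain : Ctilde * g z * (1 / (2 * a)) ≤ (a + 1) * (Ctilde / 2) := by
          rw [mul_one_div, div_le_iff₀ (by positivity)]
          have e1 : Ctilde * g z ≤ Ctilde * (a + a ^ 2) := mul_le_mul_of_nonneg_left hgz hC.le
          have e2 : (a + 1) * (Ctilde / 2) * (2 * a) = Ctilde * (a + a ^ 2) := by ring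
          rw [e2]
          exact e1
        nlinarith [mul_le_mul_of_nonneg_right hmain hexp.le]
    -- use antitonicity
    have hmono := hψanti (Set.left_mem_Icc.mpr hL.le) hZ hZ.1
    have hψ0 : ψ 0 = Real.sqrt (h 0 + ε) + 1 := by
      simp [hψdef, hF0]
    have hE : Real.exp (-(Ctilde / 2) * Z) = (Real.exp (Ctilde * Z / 2))⁻¹ := by
      rw [← Real.exp_neg]
      ring_nf
    have hEpos : 0 < Real.exp (Ctilde * Z / 2) := Real.exp_pos _
    have hstep : Real.sqrt (F Z + ε) + 1 ≤ (Real.sqrt (h 0 + ε) + 1) * Real.exp (Ctilde * Z / 2) := by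
      have h1 : (Real.sqrt (F Z + ε) + 1) * (Real.exp (Ctilde * Z / 2))⁻¹ ≤
          Real.sqrt (h 0 + ε) + 1 := by
        rw [← hE, ← hψ0]
        exact hmono
      rw [mul_inv_le_iff₀ hEpos] at h1
      linarith [h1]
    have hsq : Real.sqrt (h Z) ≤ Real.sqrt (F Z + ε) :=
      Real.sqrt_le_sqrt (by linarith [hhF Z hZ])
    linarith
  -- take ε → 0
  intro Z hZ
  apply le_of_forall_pos_le_add
  intro δ hδ
  set ε := (δ * Real.exp (-(Ctilde * Z / 2))) ^ 2 with hεdef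
  have hε : (0:ℝ) < ε := by positivity
  have hk := key ε hε Z hZ
  have h1 : Real.sqrt (h 0 + ε) ≤ Real.sqrt (h 0) + Real.sqrt ε :=
    sqrt_add_le' (hh0 0 ⟨le_refl 0, hL.le⟩) hε.le
  have h2 : Real.sqrt ε = δ * Real.exp (-(Ctilde * Z / 2)) := Real.sqrt_sq (by positivity)
  have h3 : Real.sqrt ε * Real.exp (Ctilde * Z / 2) = δ := by
    rw [h2, mul_assoc, ← Real.exp_add]
    simp
  have hEpos : 0 < Real.exp (Ctilde * Z / 2) := Real.exp_pos _
  nlinarith [mul_le_mul_of_nonneg_right h1 hEpos.le]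
end

section
/- Let R(T) = √2 / cosh(T) be the fundamental ground state. Then for every continuously differentiable, compactly supported function V : ℝ → ℝ, one has ∫_ℝ ( V′(T)² + V(T)² − R(T)² V(T)² ) dT ≥ 0; that is, the operator L₋ = −d²/dT² + 1 − R², the imaginary part of the linearization of the focusing cubic NLSE about the ground state, is nonnegative. -/
open MeasureTheory

lemma stmt_19_aux (s c v w : ℝ) (hc : c ≠ 0) (hc2 : c ^ 2 = s ^ 2 + 1) :
    w ^ 2 + v ^ 2 - (Real.sqrt 2 / c) ^ 2 * v ^ 2
      = (w + s / c * v) ^ 2 - (1 / c ^ 2 * v ^ 2 + s / c * (2 * v * w)) := by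
  have h2 : Real.sqrt 2 ^ 2 = 2 := Real.sq_sqrt (by norm_num)
  rw [div_pow, h2]
  field_simp
  linear_combination (v ^ 2) * hc2

theorem stmt_19 (R : ℝ → ℝ) (hR : ∀ T : ℝ, R T = Real.sqrt 2 / Real.cosh T) :
    ∀ V : ℝ → ℝ, ContDiff ℝ 1 V → HasCompactSupport V →
      0 ≤ ∫ T : ℝ, ((deriv V T) ^ 2 + (V T) ^ 2 - (R T) ^ 2 * (V T) ^ 2) := by
  intro V hV hVc
  have hVcont : Continuous V := hV.continuous
  have hV' : Continuous (deriv V) := hV.continuous_deriv le_rfl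
  have hVat : ∀ x : ℝ, HasDerivAt V (deriv V x) x := fun x =>
    ((hV.differentiable one_ne_zero) x).hasDerivAt
  -- g = tanh, written as sinh/cosh
  set g : ℝ → ℝ := fun T => Real.sinh T / Real.cosh T with hg_def
  have hcne : ∀ x : ℝ, Real.cosh x ≠ 0 := fun x => (Real.cosh_pos x).ne'
  have hgcont : Continuous g :=
    Real.continuous_sinh.div Real.continuous_cosh hcne
  have hgC : ContDiff ℝ 1 g :=
    Real.contDiff_sinh.div Real.contDiff_cosh hcne
  have hgderiv : ∀ x : ℝ, HasDerivAt g (1 / Real.cosh x ^ 2) x := by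
    intro x
    have h : HasDerivAt g _ x := (Real.hasDerivAt_sinh x).div (Real.hasDerivAt_cosh x) (hcne x)
    convert h using 1
    have hc2 : Real.cosh x ^ 2 = Real.sinh x ^ 2 + 1 := Real.cosh_sq x
    field_simp
    nlinarith [hc2]
  -- W = g * V^2
  set W : ℝ → ℝ := fun T => g T * V T ^ 2 with hW_def
  have hWC : ContDiff ℝ 1 W := hgC.mul (hV.pow 2)
  have hV2c : HasCompactSupport fun x : ℝ => V x ^ 2 :=
    hVc.comp_left (g := fun y : ℝ => y ^ 2) (by norm_num)
  have hWc : HasCompactSupport W := hV2c.mul_left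
  have hWderiv : ∀ x : ℝ, deriv W x
      = 1 / Real.cosh x ^ 2 * V x ^ 2 + g x * (2 * V x * deriv V x) := by
    intro x
    have h := ((hgderiv x).mul ((hVat x).pow 2)).deriv
    rw [show W = g * V ^ 2 from rfl, h]; simp only [Pi.pow_apply]; norm_num
  have hW'cont : Continuous (deriv W) := hWC.continuous_deriv le_rfl
  have hW'supp : HasCompactSupport (deriv W) := hWc.deriv
  -- integral of deriv W over ℝ is 0
  have hint0 : ∫ x : ℝ, deriv W x = 0 := by
    have hIic := hWc.integral_Iic_deriv_eq hWC 0
    have hIoi := hWc.integral_Ioi_deriv_eq hWC 0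
    have hInt : Integrable (deriv W) := hW'cont.integrable_of_hasCompactSupport hW'supp
    have h := intervalIntegral.integral_Iic_add_Ioi (μ := volume) (b := (0:ℝ))
      hInt.integrableOn hInt.integrableOn
    rw [hIic, hIoi] at h
    linarith [h]
  -- the square term
  set F : ℝ → ℝ := fun T => (deriv V T + g T * V T) ^ 2 with hF_def
  have hFcont : Continuous F := (hV'.add (hgcont.mul hVcont)).pow 2
  have hFsupp : HasCompactSupport F := by
    have hh : HasCompactSupport fun x : ℝ => deriv V x + g x * V x := by
      have h1 : HasCompactSupport (deriv V) := hVc.deriv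
      have h2 : HasCompactSupport fun x : ℝ => g x * V x := hVc.mul_left
      exact h1.add h2
    exact hh.comp_left (g := fun y : ℝ => y ^ 2) (by norm_num)
  have hFint : Integrable F := hFcont.integrable_of_hasCompactSupport hFsupp
  -- pointwise identity
  have key : ∀ T : ℝ, (deriv V T) ^ 2 + (V T) ^ 2 - (R T) ^ 2 * (V T) ^ 2
      = F T - deriv W T := by
    intro T
    rw [hF_def, hWderiv T, hR T]
    exact stmt_19_aux (Real.sinh T) (Real.cosh T) (V T) (deriv V T) (hcne T) (Real.cosh_sq T)
  have hIntW : Integrable (deriv W) := hW'cont.integrable_of_hasCompactSupport hW'supp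
  calc (0:ℝ) ≤ ∫ T : ℝ, F T := integral_nonneg fun T => sq_nonneg _
    _ = (∫ T : ℝ, F T) - ∫ T : ℝ, deriv W T := by rw [hint0]; ring
    _ = ∫ T : ℝ, (F T - deriv W T) := (integral_sub hFint hIntW).symm
    _ = ∫ T : ℝ, ((deriv V T) ^ 2 + (V T) ^ 2 - (R T) ^ 2 * (V T) ^ 2) := by
        congr 1; funext T; rw [key T]
end
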